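/- arXiv:2302.02831 — 7 statements merged into one kernel-verified Lean document; each statement's English description precedes it below -/
import Mathlib

section
/- Every finite solvable group admits a uniform cyclic group factorization; that is, for every finite solvable group G there exist an integer k ≥ 1, cyclic subgroups H_1, …, H_k of G, and a positive integer t such that for every g ∈ G the number of tuples (h_1, …, h_k) ∈ H_1 × ⋯ × H_k with h_1 h_2 ⋯ h_k = g equals t. -/
/-!
Induct on the subgroups `K` of `G`. If `K ≠ ⊥`, take `M` maximal among the subgroups with
`⁅K, K⁆ ≤ M < K`; then `K` normalizes `M` and `K = ⟨k⟩ M` for any `k ∈ K \ M`. If the cyclic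
subgroups `C₁, …, C_r` factor `M` uniformly with multiplicity `t`, then `⟨k⟩, C₁, …, C_r` factor
`K` uniformly with multiplicity `t * |⟨k⟩ ∩ M|`: an element `g ∈ K` is `c * m` with `c ∈ ⟨k⟩`,
`m ∈ M` in exactly `|⟨k⟩ ∩ M|` ways, because those `c` form a coset of `⟨k⟩ ∩ M` in `⟨k⟩`.
-/

/-- The number of ways to write `g` as an ordered product `h₁ * h₂ * ⋯ * h_k`
with `hᵢ` an element of the `i`-th member of the list `L` of subsets of `G`. -/
noncomputable def multCount {G : Type*} [Group G] (L : List (Set G)) (g : G) : ℕ :=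
  Nat.card {h : List G // List.Forall₂ (· ∈ ·) h L ∧ h.prod = g}

open Subgroup
open scoped Classical Pointwise

section

variable {G : Type*} [Group G]

instance [Finite G] (L : List (Set G)) (g : G) :
    Finite {h : List G // List.Forall₂ (· ∈ ·) h L ∧ h.prod = g} :=
  Finite.of_injective (β := List.Vector G L.length) (fun h => ⟨h.1, h.2.1.length_eq⟩)
    fun _ _ hh => Subtype.ext (congrArg List.Vector.toList hh)

lemma multCount_cons_eq_natCard_sigma (S : Set G) (L : List (Set G)) (g : G) :
    multCount (S :: L) g =
      Nat.card (Σ s : S, {h : List G // List.Forall₂ (· ∈ ·) h L ∧ h.prod = (s : G)⁻¹ * g}) := by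
  refine Nat.card_congr (Equiv.ofBijective
    (fun x => ⟨(x.1 : G) :: x.2.1, .cons x.1.2 x.2.2.1, by simp [x.2.2.2]⟩) ⟨?_, ?_⟩).symm
  · rintro ⟨⟨s, _⟩, h, _⟩ ⟨⟨s', _⟩, h', _⟩ heq
    simp only [Subtype.mk.injEq, List.cons.injEq] at heq
    obtain ⟨rfl, rfl⟩ := heq
    rfl
  · rintro ⟨_, hf, hp⟩
    obtain ⟨a, l, ha, hl, rfl⟩ := List.forall₂_cons_right_iff.mp hf
    rw [List.prod_cons] at hp
    exact ⟨⟨⟨a, ha⟩, l, hl, by rw [← hp, inv_mul_cancel_left]⟩, rfl⟩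

def IsUniformFactorization (L : List (Set G)) (K : Subgroup G) (t : ℕ) : Prop :=
  ∀ g, multCount L g = if g ∈ K then t else 0

lemma isUniformFactorization_nil : IsUniformFactorization ([] : List (Set G)) ⊥ 1 := by
  intro g
  have : {h : List G // List.Forall₂ (· ∈ ·) h ([] : List (Set G)) ∧ h.prod = g} ≃
      PLift (g = 1) :=
    { toFun h := ⟨by rw [← h.2.2, List.forall₂_nil_right_iff.mp h.2.1, List.prod_nil]⟩
      invFun h := ⟨[], .nil, by simp [h.down]⟩
      left_inv h := Subtype.ext (List.forall₂_nil_right_iff.mp h.2.1).symm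
      right_inv := fun _ => rfl }
  rw [multCount, Nat.card_congr this, mem_bot]
  split_ifs with hg <;> simp [hg]

lemma IsUniformFactorization.multCount_cons [Finite G] {L : List (Set G)} {M : Subgroup G}
    {t : ℕ} (hL : IsUniformFactorization L M t) (S : Set G) (g : G) :
    multCount (S :: L) g = t * Nat.card ↥(S ∩ g • (M : Set G)) := by
  have := Fintype.ofFinite S
  have hmem (s : G) : s⁻¹ * g ∈ M ↔ s ∈ g • (M : Set G) := by
    rw [mem_leftCoset_iff, ← inv_mem_iff, mul_inv_rev, inv_inv, SetLike.mem_coe]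
  calc multCount (S :: L) g = ∑ s : S, multCount L ((s : G)⁻¹ * g) := by
        rw [multCount_cons_eq_natCard_sigma, Nat.card_sigma]; rfl
    _ = ∑ s : S, if (s : G) ∈ g • (M : Set G) then t else 0 :=
        Finset.sum_congr rfl fun s _ => by rw [hL, if_congr (hmem s) rfl rfl]
    _ = t * Fintype.card {s : S // (s : G) ∈ g • (M : Set G)} := by
        simp only [Fintype.card_subtype, Finset.card_filter, Finset.mul_sum, mul_ite,
          mul_one, mul_zero]
    _ = t * Nat.card ↥(S ∩ g • (M : Set G)) := by
        rw [← Nat.card_eq_fintype_card]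
        exact congrArg _ (Nat.card_congr (Equiv.subtypeSubtypeEquivSubtypeInter _ _))

lemma natCard_inter_leftCoset (C M : Subgroup G) (g : G) :
    Nat.card ↥((C : Set G) ∩ g • (M : Set G)) =
      if g ∈ (C : Set G) * M then Nat.card (C ⊓ M : Subgroup G) else 0 := by
  split_ifs with hg
  · obtain ⟨c, hc, m, hm, rfl⟩ := Set.mem_mul.mp hg
    rw [mul_smul, smul_coe_set hm, ← smul_coe_set hc, ← Set.smul_set_inter,
      Set.natCard_smul_set, ← coe_inf]
    rfl
  · have hempty : (C : Set G) ∩ g • (M : Set G) = ∅ := by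
      refine Set.eq_empty_of_forall_notMem fun x ⟨hx, hxg⟩ => hg ?_
      rw [mem_leftCoset_iff] at hxg
      exact ⟨x, hx, x⁻¹ * g, by simpa using inv_mem hxg, mul_inv_cancel_left x g⟩
    simp [hempty]

lemma IsUniformFactorization.cons [Finite G] {L : List (Set G)} {M : Subgroup G} {t : ℕ}
    (hL : IsUniformFactorization L M t) {C K : Subgroup G} (hK : (K : Set G) = C * M) :
    IsUniformFactorization ((C : Set G) :: L) K (t * Nat.card (C ⊓ M : Subgroup G)) := by
  intro g
  rw [hL.multCount_cons, natCard_inter_leftCoset, ← SetLike.mem_coe, hK, mul_ite, mul_zero]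

theorem exists_zpowers_mul_eq_of_ne_bot [Finite G] [Group.IsSolvable G] {K : Subgroup G}
    (hK : K ≠ ⊥) : ∃ k : G, ∃ M < K, (K : Set G) = zpowers k * M := by
  -- maximality makes `M` a maximal subgroup of `K`, and `⁅K, K⁆ ≤ M` makes it normal in `K`
  obtain ⟨M, -, hM⟩ := Finite.exists_le_maximal (p := fun M => ⁅K, K⁆ ≤ M ∧ M < K)
    ⟨le_rfl, Group.IsSolvable.commutator_lt_of_ne_bot hK⟩
  obtain ⟨hKM, hMK⟩ := hM.prop
  obtain ⟨k, hkK, hkM⟩ := SetLike.exists_of_lt hMK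
  have hkK : zpowers k ≤ K := zpowers_le.mpr hkK
  have hnorm : zpowers k ≤ normalizer (M : Set G) :=
    le_normalizer_iff_commutator_le_right.mpr ((commutator_mono hkK hMK.le).trans hKM)
  have hsup : zpowers k ⊔ M = K := by
    refine (sup_le hkK hMK.le).eq_of_not_lt fun hlt => hkM ?_
    exact hM.le_of_ge ⟨hKM.trans le_sup_right, hlt⟩ le_sup_right (mem_sup_left (mem_zpowers k))
  exact ⟨k, M, hMK, by rw [← hsup, coe_mul_of_left_le_normalizer_right _ _ hnorm]⟩

theorem exists_isUniformFactorization_of_isSolvable [Finite G] [Group.IsSolvable G]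
    (K : Subgroup G) :
    ∃ (L : List (Subgroup G)) (t : ℕ), 0 < t ∧ (∀ H ∈ L, IsCyclic H) ∧
      IsUniformFactorization (L.map (↑)) K t := by
  induction K using WellFoundedLT.induction with
  | _ K ih =>
  rcases eq_or_ne K ⊥ with rfl | hK
  · exact ⟨[], 1, one_pos, by simp, isUniformFactorization_nil⟩
  obtain ⟨k, M, hMK, hK⟩ := exists_zpowers_mul_eq_of_ne_bot hK
  obtain ⟨L, t, ht, hcyc, hL⟩ := ih M hMK
  exact ⟨zpowers k :: L, t * Nat.card (zpowers k ⊓ M : Subgroup G), Nat.mul_pos ht Nat.card_pos,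
    List.forall_mem_cons.mpr ⟨isCyclic_zpowers k, hcyc⟩, hL.cons hK⟩

end

/-- Every finite solvable group admits a uniform cyclic group factorization. -/
theorem solvable_admits_uniform_cyclic_group_factorization
    (G : Type*) [Group G] [Finite G] [Group.IsSolvable G] :
    ∃ (k : ℕ) (H : Fin k → Subgroup G) (t : ℕ),
      1 ≤ k ∧ 0 < t ∧ (∀ i, IsCyclic (H i)) ∧
      ∀ g : G, multCount (List.ofFn fun i => (H i : Set G)) g = t := by
  obtain ⟨L, t, ht, hcyc, hL⟩ := exists_isUniformFactorization_of_isSolvable (⊤ : Subgroup G)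
  -- prefixing the trivial subgroup makes the list nonempty
  have hcyc' : ∀ H ∈ ⊥ :: L, IsCyclic H := List.forall_mem_cons.mpr ⟨Bot.isCyclic, hcyc⟩
  refine ⟨L.length + 1, (⊥ :: L).get, t * Nat.card (⊥ ⊓ ⊤ : Subgroup G), L.length.succ_pos,
    Nat.mul_pos ht Nat.card_pos, fun i => hcyc' _ (List.get_mem _ _), fun g => ?_⟩
  rw [List.ofFn_comp', List.ofFn_get, List.map_cons,
    hL.cons (C := ⊥) (K := ⊤) (by simp) g, if_pos (mem_top g)]
end

section
/- Let G be a finite group and (H_1, …, H_k) a uniform group factorization of G with multiplicity t. Suppose that for each i ∈ {1, …, k} the subgroup H_i admits a uniform cyclic group factorization (H_{i,1}, …, H_{i,ℓ_i}) with multiplicity t_i. Then the concatenated tuple (H_{1,1}, …, H_{1,ℓ_1}, H_{2,1}, …, H_{2,ℓ_2}, …, H_{k,1}, …, H_{k,ℓ_k}), with each H_{i,j} regarded as a cyclic subgroup of G, is a uniform cyclic group factorization of G with multiplicity t · ∏_{i=1}^k t_i. -/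
/-!
Counting factorizations along a concatenation is a convolution:
`multCount (L₁ ++ L₂) g = ∑ a, multCount L₁ a * multCount L₂ (a⁻¹ * g)`.
Pushed forward to `G`, the factorization of `H i` counts each element of `H i` exactly `ti i`
times and nothing else, so it counts `ti i` times as often as the one-term tuple `(H i)`.
Substituting block by block in the convolution, the concatenated tuple counts `∏ i, ti i` times
as often as `(H 1, …, H k)`, that is `t * ∏ i, ti i` times.
-/

open List

section

variable {G : Type*} [Group G]

instance finite_factorizations [Finite G] (L : List (Set G)) (g : G) :
    Finite {h : List G // Forall₂ (· ∈ ·) h L ∧ h.prod = g} :=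
  ((finite_length_eq G L.length).subset fun _ hh => hh.1.length_eq).to_subtype

def factorizationsAppendEquiv (L₁ L₂ : List (Set G)) (g : G) :
    {h : List G // Forall₂ (· ∈ ·) h (L₁ ++ L₂) ∧ h.prod = g} ≃
      Σ a : G, {h : List G // Forall₂ (· ∈ ·) h L₁ ∧ h.prod = a} ×
        {h : List G // Forall₂ (· ∈ ·) h L₂ ∧ h.prod = a⁻¹ * g} where
  toFun := fun ⟨h, hf, hp⟩ => ⟨(h.take L₁.length).prod, ⟨_, forall₂_take_append _ _ _ hf, rfl⟩,
    ⟨_, forall₂_drop_append _ _ _ hf, by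
      rw [← hp, ← prod_take_mul_prod_drop h L₁.length, inv_mul_cancel_left]⟩⟩
  invFun x := ⟨x.2.1.1 ++ x.2.2.1, rel_append x.2.1.2.1 x.2.2.2.1, by
    rw [prod_append, x.2.1.2.2, x.2.2.2.2, mul_inv_cancel_left]⟩
  left_inv := fun ⟨_, _, _⟩ => Subtype.ext (take_append_drop _ _)
  right_inv := by
    rintro ⟨a, ⟨h₁, hf₁, rfl⟩, ⟨_, _, _⟩⟩
    dsimp only
    -- the membership proofs mention `take` and `drop`, so free them before rewriting those
    generalize_proofs p1 p2 p3 p4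
    revert p1 p2 p3 p4
    rw [take_left' hf₁.length_eq, drop_left' hf₁.length_eq]
    intros
    rfl

theorem multCount_append [Fintype G] (L₁ L₂ : List (Set G)) (g : G) :
    multCount (L₁ ++ L₂) g = ∑ a, multCount L₁ a * multCount L₂ (a⁻¹ * g) := by
  simp only [multCount, Nat.card_congr (factorizationsAppendEquiv L₁ L₂ g), Nat.card_sigma,
    Nat.card_prod]

theorem multCount_flatten_ofFn [Finite G] {k : ℕ} (L : Fin k → List (Set G))
    (S : Fin k → Set G) (c : Fin k → ℕ)
    (hL : ∀ i g, multCount (L i) g = c i * multCount [S i] g) (g : G) :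
    multCount (ofFn L).flatten g = (∏ i, c i) * multCount (ofFn S) g := by
  have := Fintype.ofFinite G
  induction k generalizing g with
  | zero => simp
  | succ k ih =>
    rw [ofFn_succ, flatten_cons, ofFn_succ, ← singleton_append, multCount_append,
      multCount_append, Fin.prod_univ_succ, Finset.mul_sum]
    refine Finset.sum_congr rfl fun a _ => ?_
    rw [hL, ih _ _ _ (fun i => hL i.succ)]
    ring

theorem exists_map_eq_of_forall₂_map_image {α β : Type*} (f : α → β) :
    ∀ {L : List (Set α)} {l : List β}, Forall₂ (· ∈ ·) l (L.map (f '' ·)) →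
      ∃ m, Forall₂ (· ∈ ·) m L ∧ m.map f = l
  | [], _, .nil => ⟨[], .nil, rfl⟩
  | _ :: _, _, .cons ⟨x, hx, rfl⟩ hl =>
    let ⟨m, hm, hml⟩ := exists_map_eq_of_forall₂_map_image f hl
    ⟨x :: m, .cons hx hm, by rw [map_cons, hml]⟩

theorem multCount_map_image {K : Type*} [Group K] {f : K →* G} (hf : Function.Injective f)
    (L : List (Set K)) (x : K) : multCount (L.map (f '' ·)) (f x) = multCount L x := by
  refine (Nat.card_congr (Equiv.ofBijective
    (fun m => ⟨m.1.map f, forall₂_map_right_iff.2 (forall₂_map_left_iff.2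
      (m.2.1.imp fun _ _ => Set.mem_image_of_mem f)), by rw [prod_hom, m.2.2]⟩) ⟨?_, ?_⟩)).symm
  · intro m₁ m₂ h
    exact Subtype.ext (map_injective_iff.2 hf (congrArg Subtype.val h))
  · rintro ⟨l, hl, hlx⟩
    obtain ⟨m, hm, rfl⟩ := exists_map_eq_of_forall₂_map_image f hl
    exact ⟨⟨m, hm, hf (by rwa [← prod_hom])⟩, rfl⟩

theorem multCount_map_image_eq_zero {K : Type*} [Group K] (f : K →* G) (L : List (Set K))
    {g : G} (hg : g ∉ Set.range f) : multCount (L.map (f '' ·)) g = 0 := by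
  rw [multCount, Nat.card_eq_zero, isEmpty_subtype]
  refine Or.inl fun l ⟨hl, hlg⟩ => hg ?_
  obtain ⟨m, -, rfl⟩ := exists_map_eq_of_forall₂_map_image f hl
  exact ⟨m.prod, by rw [← hlg, prod_hom]⟩

theorem multCount_singleton (S : Set G) (g : G) : multCount [S] g = S.indicator 1 g := by
  have factorization_iff (h : List G) : Forall₂ (· ∈ ·) h [S] ∧ h.prod = g ↔ g ∈ S ∧ h = [g] := by
    simp only [forall₂_cons_right_iff, forall₂_nil_right_iff]
    aesop
  rw [multCount, Nat.card_congr (Equiv.subtypeEquivRight factorization_iff)]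
  by_cases hg : g ∈ S <;> simp [hg]

theorem multCount_map_image_subtype_of_forall_eq (K : Subgroup G) (L : List (Set K)) {c : ℕ}
    (hL : ∀ x, multCount L x = c) (g : G) :
    multCount (L.map (K.subtype '' ·)) g = c * multCount [(K : Set G)] g := by
  rw [multCount_singleton]
  by_cases hg : g ∈ K
  · rw [Set.indicator_of_mem hg, Pi.one_apply, mul_one, ← hL ⟨g, hg⟩,
      ← multCount_map_image K.subtype_injective]
    rfl
  · rw [Set.indicator_of_notMem hg, mul_zero]
    exact multCount_map_image_eq_zero _ _ (by simpa using hg)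

end

theorem uniform_cyclic_group_factorization_concat_general
    {G : Type*} [Group G] [Finite G] {k : ℕ}
    (H : Fin k → Subgroup G) (t : ℕ)
    (hH : ∀ g : G, multCount (List.ofFn fun i => (H i : Set G)) g = t)
    (ℓ : Fin k → ℕ)
    (Hij : (i : Fin k) → Fin (ℓ i) → Subgroup (H i))
    (hcyc : ∀ i j, IsCyclic (Hij i j))
    (ti : Fin k → ℕ)
    (hHij : ∀ (i : Fin k) (h : H i),
      multCount (List.ofFn fun j => (Hij i j : Set (H i))) h = ti i) :
    (∀ (i : Fin k) (j : Fin (ℓ i)), IsCyclic ((Hij i j).map (H i).subtype)) ∧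
    ∀ g : G,
      multCount
        ((List.ofFn fun i =>
          List.ofFn fun j => (((Hij i j).map (H i).subtype : Subgroup G) : Set G)).flatten) g
        = t * ∏ i, ti i := by
  refine ⟨fun i j => isCyclic_of_surjective _ ((H i).subtype.subgroupMap_surjective _),
    fun g => ?_⟩
  rw [multCount_flatten_ofFn _ (fun i => H i) ti, hH, mul_comm]
  intro i g
  simpa [map_ofFn, Function.comp_def] using
    multCount_map_image_subtype_of_forall_eq (H i) _ (hHij i) g

/-- If `(H 1, …, H k)` is a uniform group factorization of `G` with multiplicity `t` and
each `H i` admits a uniform cyclic group factorization `(Hij i 1, …, Hij i (ℓ i))` with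
multiplicity `ti i`, then the concatenated tuple of the `Hij i j` (regarded as cyclic
subgroups of `G`) is a uniform cyclic group factorization of `G` with multiplicity
`t * ∏ i, ti i`. -/
theorem uniform_cyclic_group_factorization_concat
    {G : Type*} [Group G] [Finite G] {k : ℕ} (hk : 1 ≤ k)
    (H : Fin k → Subgroup G) (t : ℕ) (ht : 0 < t)
    (hH : ∀ g : G, multCount (List.ofFn fun i => (H i : Set G)) g = t)
    (ℓ : Fin k → ℕ) (hℓ : ∀ i, 1 ≤ ℓ i)
    (Hij : (i : Fin k) → Fin (ℓ i) → Subgroup (H i))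
    (hcyc : ∀ i j, IsCyclic (Hij i j))
    (ti : Fin k → ℕ) (hti : ∀ i, 0 < ti i)
    (hHij : ∀ (i : Fin k) (h : H i),
      multCount (List.ofFn fun j => (Hij i j : Set (H i))) h = ti i) :
    (∀ (i : Fin k) (j : Fin (ℓ i)), IsCyclic ((Hij i j).map (H i).subtype)) ∧
    ∀ g : G,
      multCount
        ((List.ofFn fun i =>
          List.ofFn fun j => (((Hij i j).map (H i).subtype : Subgroup G) : Set G)).flatten) g
        = t * ∏ i, ti i :=
  uniform_cyclic_group_factorization_concat_general H t hH ℓ Hij hcyc ti hHij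
end

section
/- Let G and G' be finite groups, f : G → G' a group homomorphism, and H_1, …, H_k subgroups of G. For each i set t_i := |ker(f) ∩ H_i|. If the tuple of image subgroups (f(H_1), f(H_2), …, f(H_k)) is a uniform group factorization of G' with multiplicity t', then the tuple (H_1, H_2, …, H_k, ker(f)) is a uniform group factorization of G with multiplicity t' · ∏_{i=1}^k t_i. -/
namespace List

theorem forall₂_ofFn_iff {α β : Type*} {R : α → β → Prop} {n : ℕ} {b : Fin n → β} {l : List α} :
    Forall₂ R l (ofFn b) ↔ ∃ a : Fin n → α, (∀ i, R (a i) (b i)) ∧ l = ofFn a := by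
  constructor
  · intro h
    have hl : l.length = n := h.length_eq.trans length_ofFn
    refine ⟨fun i => l[i.cast hl.symm], fun i => ?_, ?_⟩
    · simpa using h.get (i := i) (by simp [hl]) (by simp)
    · exact ext_get (by simp [hl]) fun i _ _ => by simp
  · rintro ⟨a, hab, rfl⟩
    exact forall₂_iff_get.2 ⟨by simp, fun i hi _ => by simpa using hab ⟨i, by simpa using hi⟩⟩

theorem forall₂_append_singleton_iff {α β : Type*} {R : α → β → Prop} {L : List β} {b : β}
    {l : List α} :
    Forall₂ R l (L ++ [b]) ↔ ∃ l' a, Forall₂ R l' L ∧ R a b ∧ l = l' ++ [a] := by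
  rw [← forall₂_reverse_iff, reverse_append, reverse_singleton, singleton_append,
    forall₂_cons_right_iff]
  constructor
  · rintro ⟨a, u, hab, hu, hl⟩
    refine ⟨u.reverse, a, by simpa using forall₂_reverse_iff.2 hu, hab, ?_⟩
    simpa using congrArg reverse hl
  · rintro ⟨l', a, hl', hab, rfl⟩
    exact ⟨a, l'.reverse, hab, forall₂_reverse_iff.2 hl', by simp⟩

end List

theorem card_forall₂_mem_ofFn_and {M : Type*} {n : ℕ} (S : Fin n → Set M) (P : List M → Prop) :
    Nat.card {l : List M // List.Forall₂ (· ∈ ·) l (List.ofFn S) ∧ P l}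
      = Nat.card {y : ∀ i, S i // P (List.ofFn fun i => (y i : M))} := by
  symm
  refine Nat.card_congr (Equiv.ofBijective (fun y => ⟨List.ofFn fun i => (y.1 i : M), ?_, y.2⟩)
    ⟨fun y z h => ?_, ?_⟩)
  · exact List.forall₂_ofFn_iff.2 ⟨_, fun i => (y.1 i).2, rfl⟩
  · have hyz := List.ofFn_inj.1 (congrArg Subtype.val h)
    exact Subtype.ext (funext fun i => Subtype.ext (congrFun hyz i))
  · rintro ⟨l, hl, hP⟩
    obtain ⟨a, ha, rfl⟩ := List.forall₂_ofFn_iff.1 hl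
    exact ⟨⟨fun i => ⟨a i, ha i⟩, hP⟩, rfl⟩

section multCount

variable {G : Type*} [Group G]

theorem multCount_ofFn {n : ℕ} (S : Fin n → Set G) (g : G) :
    multCount (List.ofFn S) g
      = Nat.card {y : ∀ i, S i // (List.ofFn fun i => (y i : G)).prod = g} :=
  card_forall₂_mem_ofFn_and S _

theorem multCount_append_singleton (L : List (Set G)) (S : Set G) (g : G) :
    multCount (L ++ [S]) g
      = Nat.card {l : List G // List.Forall₂ (· ∈ ·) l L ∧ l.prod⁻¹ * g ∈ S} := by
  symm
  refine Nat.card_congr (Equiv.ofBijective (fun l => ⟨l.1 ++ [l.1.prod⁻¹ * g], ?_, ?_⟩)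
    ⟨fun l l' h => ?_, ?_⟩)
  · exact List.forall₂_append_singleton_iff.2 ⟨_, _, l.2.1, l.2.2, rfl⟩
  · simp
  · exact Subtype.ext (List.append_inj' (congrArg Subtype.val h) rfl).1
  · rintro ⟨l, hl, rfl⟩
    obtain ⟨l', a, hl', ha, rfl⟩ := List.forall₂_append_singleton_iff.1 hl
    exact ⟨⟨l', hl', by simpa using ha⟩, by simp⟩

end multCount

namespace MonoidHom

theorem card_preimage_of_surjective {A B : Type*} [Group A] [Group B] {φ : A →* B}
    (hφ : Function.Surjective φ) (T : Set B) :
    Nat.card (φ ⁻¹' T) = Nat.card T * Nat.card φ.ker := by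
  set e := QuotientGroup.quotientKerEquivOfSurjective φ hφ
  have hT : Nat.card (e ⁻¹' T) = Nat.card T :=
    Nat.card_preimage_of_injective e.injective (by simp [e.surjective.range_eq])
  rw [← hT, mul_comm, ← QuotientGroup.card_preimage_mk]
  rfl

theorem card_ker_piMap {ι : Type*} [Fintype ι] {M N : ι → Type*} [∀ i, Group (M i)]
    [∀ i, Group (N i)] (φ : ∀ i, M i →* N i) :
    Nat.card (piMap φ).ker = ∏ i, Nat.card (φ i).ker := by
  rw [← Nat.card_pi]
  exact Nat.card_congr <|
    (Equiv.subtypeEquivRight fun y => by simp [MonoidHom.mem_ker, funext_iff]).trans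
      Equiv.subtypePiEquivPi

theorem card_ker_subgroupMap {G G' : Type*} [Group G] [Group G'] (f : G →* G')
    (H : Subgroup G) : Nat.card (f.subgroupMap H).ker = Nat.card (f.ker ⊓ H : Subgroup G) := by
  rw [Subgroup.ker_subgroupMap, ← Subgroup.inf_subgroupOf_right]
  exact Nat.card_congr (Subgroup.subgroupOfEquivOfLe inf_le_right).toEquiv

end MonoidHom

theorem uniform_group_factorization_of_hom_general
    {G G' : Type*} [Group G] [Group G']
    (f : G →* G') {k : ℕ} (H : Fin k → Subgroup G)
    (t' : ℕ)
    (hH : ∀ g' : G',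
      multCount (List.ofFn fun i => (((H i).map f : Subgroup G') : Set G')) g' = t') :
    ∀ g : G,
      multCount ((List.ofFn fun i => (H i : Set G)) ++ [(f.ker : Set G)]) g
        = t' * ∏ i, Nat.card (f.ker ⊓ H i : Subgroup G) := by
  intro g
  set Φ := MonoidHom.piMap fun i => f.subgroupMap (H i)
  have hΦ : Function.Surjective Φ :=
    Function.Surjective.piMap fun i => f.subgroupMap_surjective (H i)
  calc multCount ((List.ofFn fun i => (H i : Set G)) ++ [(f.ker : Set G)]) g
      = Nat.card {y : ∀ i, H i // (List.ofFn fun i => (y i : G)).prod⁻¹ * g ∈ f.ker} := by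
        rw [multCount_append_singleton, card_forall₂_mem_ofFn_and]
        rfl
    _ = Nat.card (Φ ⁻¹' {w | (List.ofFn fun i => (w i : G')).prod = f g}) :=
        Nat.card_congr <| Equiv.subtypeEquivRight fun y => by
          rw [MonoidHom.mem_ker, map_mul, map_inv, inv_mul_eq_one, map_list_prod, List.map_ofFn]
          rfl
    _ = t' * ∏ i, Nat.card (f.ker ⊓ H i : Subgroup G) := by
        rw [MonoidHom.card_preimage_of_surjective hΦ, MonoidHom.card_ker_piMap, ← hH (f g),
          multCount_ofFn]
        simp only [MonoidHom.card_ker_subgroupMap]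
        rfl

/-- If `f : G →* G'` is a homomorphism, `H 1, …, H k` are subgroups of `G`, and
`(f(H 1), …, f(H k))` is a uniform group factorization of `G'` with multiplicity `t'`,
then `(H 1, …, H k, ker f)` is a uniform group factorization of `G` with multiplicity
`t' * ∏ i, |ker f ∩ H i|`. -/
theorem uniform_group_factorization_of_hom
    {G G' : Type*} [Group G] [Finite G] [Group G'] [Finite G']
    (f : G →* G') {k : ℕ} (hk : 1 ≤ k) (H : Fin k → Subgroup G)
    (t' : ℕ) (ht' : 0 < t')
    (hH : ∀ g' : G',
      multCount (List.ofFn fun i => (((H i).map f : Subgroup G') : Set G')) g' = t') :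
    ∀ g : G,
      multCount ((List.ofFn fun i => (H i : Set G)) ++ [(f.ker : Set G)]) g
        = t' * ∏ i, Nat.card (f.ker ⊓ H i : Subgroup G) :=
  uniform_group_factorization_of_hom_general f H t' hH
end

section
/- Let G be a finite group, N a proper normal subgroup of G, and π : G → G/N the canonical surjection. Let H_1, …, H_k be subgroups of G. If (π(H_1), π(H_2), …, π(H_k)) is a uniform group factorization of the quotient group G/N, then (H_1, H_2, …, H_k, N) is a uniform group factorization of G. Moreover, if each π(H_i) is a proper subgroup of G/N, then each of H_1, …, H_k, N is a proper subgroup of G, so the resulting uniform group factorization of G is proper. -/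
namespace List

theorem forall₂_mem_ofFn_iff {α : Type*} {k : ℕ} {s : Fin k → Set α} {l : List α} :
    Forall₂ (· ∈ ·) l (ofFn s) ↔ ∃ a : ∀ i, s i, ofFn (fun i => (a i : α)) = l := by
  induction k generalizing l with
  | zero => simp [eq_comm]
  | succ k ih =>
    simp_rw [ofFn_succ, forall₂_cons_right_iff, ih, Fin.exists_fin_succ_pi, Fin.cons_zero,
      Fin.cons_succ]
    constructor
    · rintro ⟨x, _, hx, ⟨a, rfl⟩, rfl⟩
      exact ⟨⟨x, hx⟩, a, rfl⟩
    · rintro ⟨x, a, rfl⟩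
      exact ⟨x, _, x.2, ⟨a, rfl⟩, rfl⟩

theorem forall₂_append_singleton_right_iff {α β : Type*} {R : α → β → Prop} {l : List α}
    {L : List β} {b : β} :
    Forall₂ R l (L ++ [b]) ↔ ∃ l' a, Forall₂ R l' L ∧ R a b ∧ l' ++ [a] = l := by
  rw [← forall₂_reverse_iff, reverse_append, reverse_singleton, singleton_append,
    forall₂_cons_right_iff]
  constructor
  · rintro ⟨a, u, hab, hu, hl⟩
    refine ⟨u.reverse, a, by rwa [← forall₂_reverse_iff, reverse_reverse], hab, ?_⟩
    rw [← reverse_reverse l, hl, reverse_cons]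
  · rintro ⟨l', a, hl', hab, rfl⟩
    exact ⟨a, l'.reverse, hab, forall₂_reverse_iff.2 hl', by simp⟩

theorem card_forall₂_mem_ofFn_and {α : Type*} {k : ℕ} (s : Fin k → Set α)
    (P : List α → Prop) :
    Nat.card {l : List α // Forall₂ (· ∈ ·) l (ofFn s) ∧ P l} =
      Nat.card {a : ∀ i, s i // P (ofFn fun i => (a i : α))} := by
  have hinj : Function.Injective fun a : (∀ i, s i) => ofFn fun i => (a i : α) :=
    fun a b h => funext fun i => Subtype.ext (congrFun (ofFn_injective h) i)
  refine .trans (Nat.card_congr (Equiv.subtypeEquivRight fun l => ?_))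
    (Nat.card_image_of_injective hinj {a | P (ofFn fun i => (a i : α))})
  simp only [forall₂_mem_ofFn_iff, Set.mem_ofPred_eq, Set.mem_image]
  constructor
  · rintro ⟨⟨a, rfl⟩, hP⟩
    exact ⟨a, hP, rfl⟩
  · rintro ⟨a, hP, rfl⟩
    exact ⟨⟨a, rfl⟩, hP⟩

end List

theorem MonoidHom.card_preimage_of_surjective_s5 {A B : Type*} [Group A] [Group B] {f : A →* B}
    (hf : Function.Surjective f) (S : Set B) :
    Nat.card (f ⁻¹' S) = Nat.card f.ker * Nat.card S := by
  set e := QuotientGroup.quotientKerEquivOfSurjective f hf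
  have hfactor : f ⁻¹' S = QuotientGroup.mk ⁻¹' (e ⁻¹' S) := rfl
  rw [hfactor, QuotientGroup.card_preimage_mk,
    Nat.card_preimage_of_injective e.injective (by simp [e.surjective.range_eq])]

section

variable {G : Type*} [Group G]

theorem multCount_append_subgroup (L : List (Set G)) (N : Subgroup G) (g : G) :
    multCount (L ++ [(N : Set G)]) g =
      Nat.card {l : List G // List.Forall₂ (· ∈ ·) l L ∧ (l.prod : G ⧸ N) = g} := by
  have hinj : Function.Injective fun l : List G => l ++ [l.prod⁻¹ * g] :=
    fun l l' h => List.append_inj_left' h rfl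
  refine .trans (Nat.card_congr (Equiv.subtypeEquivRight fun h => ?_))
    (Nat.card_image_of_injective hinj
      {l | List.Forall₂ (· ∈ ·) l L ∧ (l.prod : G ⧸ N) = g})
  simp only [List.forall₂_append_singleton_right_iff, Set.mem_ofPred_eq, Set.mem_image]
  constructor
  · rintro ⟨⟨l, x, hl, hx, rfl⟩, hprod⟩
    obtain rfl : x = l.prod⁻¹ * g := by
      rw [← hprod, List.prod_append, List.prod_singleton, inv_mul_cancel_left]
    exact ⟨l, ⟨hl, QuotientGroup.eq.2 hx⟩, rfl⟩
  · rintro ⟨l, ⟨hl, hq⟩, rfl⟩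
    exact ⟨⟨l, _, hl, QuotientGroup.eq.1 hq, rfl⟩, by simp⟩

theorem card_tuples_map_prod_eq_card_ker_mul {Q : Type*} [Group Q] (φ : G →* Q) {k : ℕ}
    (H : Fin k → Subgroup G) (q : Q) :
    Nat.card {a : ∀ i, H i // φ (List.ofFn fun i => (a i : G)).prod = q} =
      Nat.card (MonoidHom.piMap fun i => φ.subgroupMap (H i)).ker *
        Nat.card {b : ∀ i, (H i).map φ // (List.ofFn fun i => (b i : Q)).prod = q} := by
  refine .trans (Nat.card_congr (Equiv.subtypeEquivRight fun a => ?_))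
    (MonoidHom.card_preimage_of_surjective_s5
      (Function.Surjective.piMap fun i => φ.subgroupMap_surjective (H i))
      {b : ∀ i, (H i).map φ | (List.ofFn fun i => (b i : Q)).prod = q})
  simp [map_list_prod, List.map_ofFn, Function.comp_def]

end

theorem uniform_group_factorization_of_quotient_general
    {G : Type*} [Group G] [Finite G] (N : Subgroup G) [N.Normal] (hN : N ≠ ⊤)
    {k : ℕ} (H : Fin k → Subgroup G) (t' : ℕ) (ht' : 0 < t')
    (hH : ∀ q : G ⧸ N,
      multCount
        (List.ofFn fun i =>
          (((H i).map (QuotientGroup.mk' N) : Subgroup (G ⧸ N)) : Set (G ⧸ N))) q = t') :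
    (∃ t : ℕ, 0 < t ∧
      ∀ g : G, multCount ((List.ofFn fun i => (H i : Set G)) ++ [(N : Set G)]) g = t) ∧
    ((∀ i, (H i).map (QuotientGroup.mk' N) ≠ ⊤) → (∀ i, H i ≠ ⊤) ∧ N ≠ ⊤) := by
  set K := (MonoidHom.piMap fun i => (QuotientGroup.mk' N).subgroupMap (H i)).ker
  refine ⟨⟨t' * Nat.card K, Nat.mul_pos ht' Nat.card_pos, fun g => ?_⟩,
    fun hproper => ⟨fun i hi => hproper i ?_, hN⟩⟩
  · have hq := hH g
    rw [multCount, List.card_forall₂_mem_ofFn_and] at hq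
    rw [multCount_append_subgroup, List.card_forall₂_mem_ofFn_and, ← hq, mul_comm]
    exact card_tuples_map_prod_eq_card_ker_mul (QuotientGroup.mk' N) H g
  · rw [hi]
    exact Subgroup.map_top_of_surjective _ (QuotientGroup.mk'_surjective N)

/-- If `N` is a proper normal subgroup of `G`, `H 1, …, H k` are subgroups of `G`, and
`(π(H 1), …, π(H k))` is a uniform group factorization of `G / N` (where `π` is the
canonical projection), then `(H 1, …, H k, N)` is a uniform group factorization of `G`;
moreover, if each `π(H i)` is proper in `G / N`, then each `H i` and `N` are proper
in `G`, so the factorization is proper. -/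
theorem uniform_group_factorization_of_quotient
    {G : Type*} [Group G] [Finite G] (N : Subgroup G) [N.Normal] (hN : N ≠ ⊤)
    {k : ℕ} (hk : 1 ≤ k) (H : Fin k → Subgroup G) (t' : ℕ) (ht' : 0 < t')
    (hH : ∀ q : G ⧸ N,
      multCount
        (List.ofFn fun i =>
          (((H i).map (QuotientGroup.mk' N) : Subgroup (G ⧸ N)) : Set (G ⧸ N))) q = t') :
    (∃ t : ℕ, 0 < t ∧
      ∀ g : G, multCount ((List.ofFn fun i => (H i : Set G)) ++ [(N : Set G)]) g = t) ∧
    ((∀ i, (H i).map (QuotientGroup.mk' N) ≠ ⊤) → (∀ i, H i ≠ ⊤) ∧ N ≠ ⊤) :=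
  uniform_group_factorization_of_quotient_general N hN H t' ht' hH
end

section
/- Let G be a nontrivial finite cyclic group. Then G admits a proper uniform group factorization (i.e., a uniform group factorization in which every factor is a proper subgroup of G) if and only if the order of G is not a prime power. Moreover, when |G| is not a prime power, G admits a proper uniform cyclic group factorization with multiplicity one. -/
theorem Nat.exists_coprime_mul_eq_of_not_prime_pow {n : ℕ} (hn : n ≠ 0)
    (h : ¬∃ p r : ℕ, p.Prime ∧ n = p ^ r) : ∃ a b, 1 < a ∧ 1 < b ∧ a.Coprime b ∧ a * b = n := by
  have hp : n.minFac.Prime := Nat.minFac_prime fun h1 => h ⟨2, 0, Nat.prime_two, h1⟩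
  refine ⟨ordProj[n.minFac] n, ordCompl[n.minFac] n, ?_, ?_,
    (Nat.coprime_ordCompl hp hn).pow_left _, Nat.ordProj_mul_ordCompl_eq_self n _⟩
  · exact Nat.one_lt_pow (hp.factorization_pos_of_dvd hn n.minFac_dvd).ne' hp.one_lt
  · have hb : ordCompl[n.minFac] n ≠ 1 := fun hb =>
      h ⟨n.minFac, n.factorization n.minFac, hp,
        (Nat.ordProj_mul_ordCompl_eq_self n _).symm.trans (by rw [hb, mul_one])⟩
    have := Nat.ordCompl_pos n.minFac hn
    omega

theorem List.Forall₂.prod_mem {M S : Type*} [Monoid M] [SetLike S M] [SubmonoidClass S M]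
    {K : S} {l : List M} {L : List (Set M)} (h : List.Forall₂ (· ∈ ·) l L)
    (hL : ∀ T ∈ L, T ⊆ K) : l.prod ∈ K := by
  induction h with
  | nil => exact one_mem K
  | cons hx _ ih =>
    rw [List.forall_mem_cons] at hL
    rw [List.prod_cons]
    exact mul_mem (hL.1 hx) (ih hL.2)

section multCount

variable {G : Type*} [Group G]

theorem multCount_eq_zero_of_forall_subset_of_notMem {K : Subgroup G} {L : List (Set G)}
    (hL : ∀ T ∈ L, T ⊆ K) {g : G} (hg : g ∉ K) : multCount L g = 0 := by
  rw [multCount, Nat.card_eq_zero]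
  left
  exact ⟨fun ⟨l, hl, hprod⟩ => hg (hprod ▸ hl.prod_mem hL)⟩

theorem multCount_pair (S T : Set G) (g : G) :
    multCount [S, T] g = Nat.card {x : S × T // (x.1 : G) * x.2 = g} := by
  refine (Nat.card_congr (Equiv.ofBijective
    (fun x => ⟨[x.1.1, x.1.2], .cons x.1.1.2 (.cons x.1.2.2 .nil), by simpa using x.2⟩)
    ⟨fun x y hxy => ?_, ?_⟩)).symm
  · simp only [Subtype.mk.injEq, List.cons.injEq, and_true] at hxy
    exact Subtype.ext (Prod.ext (Subtype.ext hxy.1) (Subtype.ext hxy.2))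
  · rintro ⟨l, hl, hprod⟩
    obtain ⟨x, l, hx, hlT, rfl⟩ := List.forall₂_cons_right_iff.mp hl
    obtain ⟨y, l, hy, hlnil, rfl⟩ := List.forall₂_cons_right_iff.mp hlT
    obtain rfl := List.forall₂_nil_right_iff.mp hlnil
    exact ⟨⟨(⟨x, hx⟩, ⟨y, hy⟩), by simpa using hprod⟩, rfl⟩

theorem Subgroup.IsComplement'.multCount_eq_one {H K : Subgroup G} (h : H.IsComplement' K)
    (g : G) : multCount [(H : Set G), K] g = 1 := by
  rw [multCount_pair, Nat.card_eq_one_iff_unique]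
  exact ⟨⟨fun x y => Subtype.ext (h.1 (x.2.trans y.2.symm))⟩, ⟨⟨_, (h.2 g).choose_spec⟩⟩⟩

end multCount

theorem Subgroup.natCard_dvd_pow_pred_of_ne_top {G : Type*} [Group G] [Finite G] {p r : ℕ}
    (hp : p.Prime) (hcard : Nat.card G = p ^ r) {H : Subgroup G} (hH : H ≠ ⊤) :
    Nat.card H ∣ p ^ (r - 1) := by
  obtain ⟨s, hs, hHs⟩ := (Nat.dvd_prime_pow hp).mp (hcard ▸ H.card_subgroup_dvd_card)
  have hsr : s ≠ r := by
    rintro rfl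
    exact hH (H.eq_top_of_card_eq (hHs.trans hcard.symm))
  exact hHs ▸ pow_dvd_pow p (by omega)

namespace IsCyclic

variable {G : Type*} [Group G] [Finite G] [IsCyclic G]

theorem exists_subgroup_natCard_eq {d : ℕ} (hd : d ∣ Nat.card G) :
    ∃ H : Subgroup G, Nat.card H = d := by
  obtain ⟨g, hg⟩ := exists_ofOrder_eq_natCard (α := G)
  refine ⟨Subgroup.zpowers (g ^ (Nat.card G / d)), ?_⟩
  rw [Nat.card_zpowers, ← hg, orderOf_pow_orderOf_div (hg ▸ Nat.card_pos.ne') (hg ▸ hd)]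

theorem exists_isComplement'_ne_top (h : ¬∃ p r : ℕ, p.Prime ∧ Nat.card G = p ^ r) :
    ∃ H K : Subgroup G, H.IsComplement' K ∧ H ≠ ⊤ ∧ K ≠ ⊤ := by
  obtain ⟨a, b, ha, hb, hab, hn⟩ := Nat.exists_coprime_mul_eq_of_not_prime_pow Nat.card_pos.ne' h
  obtain ⟨H, hH⟩ := exists_subgroup_natCard_eq (G := G) ⟨b, hn.symm⟩
  obtain ⟨K, hK⟩ := exists_subgroup_natCard_eq (G := G) ⟨a, (mul_comm a b ▸ hn).symm⟩
  refine ⟨H, K, Subgroup.isComplement'_of_coprime (by rw [hH, hK, hn]) (hH ▸ hK ▸ hab), ?_, ?_⟩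
  · rintro rfl
    rw [Subgroup.card_top, ← hn] at hH
    nlinarith
  · rintro rfl
    rw [Subgroup.card_top, ← hn] at hK
    nlinarith

theorem exists_ne_top_forall_le_of_card_eq_prime_pow {p r : ℕ} (hp : p.Prime) (hr : r ≠ 0)
    (hcard : Nat.card G = p ^ r) : ∃ M : Subgroup G, M ≠ ⊤ ∧ ∀ H : Subgroup G, H ≠ ⊤ → H ≤ M := by
  let := commGroup (α := G)
  refine ⟨(powMonoidHom (p ^ (r - 1)) : G →* G).ker, fun htop => ?_, fun H hH x hx => ?_⟩
  · have : Monoid.exponent G ∣ p ^ (r - 1) := Monoid.exponent_dvd_of_forall_pow_eq_one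
      fun g => (htop ▸ Subgroup.mem_top g : g ∈ (powMonoidHom (p ^ (r - 1)) : G →* G).ker)
    rw [exponent_eq_card, hcard, Nat.pow_dvd_pow_iff_le_right hp.one_lt] at this
    omega
  · exact orderOf_dvd_iff_pow_eq_one.mp <| (Subgroup.orderOf_dvd_natCard H hx).trans
      (Subgroup.natCard_dvd_pow_pred_of_ne_top hp hcard hH)

theorem exists_cyclic_factorization_multCount_eq_one
    (h : ¬∃ p r : ℕ, p.Prime ∧ Nat.card G = p ^ r) :
    ∃ (k : ℕ) (H : Fin k → Subgroup G),
      1 ≤ k ∧ (∀ i, H i ≠ ⊤) ∧ (∀ i, IsCyclic (H i)) ∧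
      ∀ g : G, multCount (List.ofFn fun i => (H i : Set G)) g = 1 := by
  obtain ⟨H, K, hHK, hH, hK⟩ := exists_isComplement'_ne_top h
  refine ⟨2, ![H, K], by norm_num, fun i => ?_, fun i => Subgroup.isCyclic _, fun g => ?_⟩
  · fin_cases i <;> assumption
  · simpa [List.ofFn_succ] using hHK.multCount_eq_one g

end IsCyclic

theorem cyclic_proper_uniform_group_factorization_iff_general
    (G : Type*) [Group G] [Finite G] [IsCyclic G] :
    ((∃ (k : ℕ) (H : Fin k → Subgroup G) (t : ℕ),
        1 ≤ k ∧ 0 < t ∧ (∀ i, H i ≠ ⊤) ∧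
        ∀ g : G, multCount (List.ofFn fun i => (H i : Set G)) g = t) ↔
      ¬ ∃ p r : ℕ, p.Prime ∧ Nat.card G = p ^ r) ∧
    ((¬ ∃ p r : ℕ, p.Prime ∧ Nat.card G = p ^ r) →
      ∃ (k : ℕ) (H : Fin k → Subgroup G),
        1 ≤ k ∧ (∀ i, H i ≠ ⊤) ∧ (∀ i, IsCyclic (H i)) ∧
        ∀ g : G, multCount (List.ofFn fun i => (H i : Set G)) g = 1) := by
  refine ⟨⟨?_, fun h => ?_⟩, IsCyclic.exists_cyclic_factorization_multCount_eq_one⟩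
  · rintro ⟨k, H, t, hk, ht, hH, huni⟩ ⟨p, r, hp, hcard⟩
    have hr : r ≠ 0 := by
      rintro rfl
      have := (Nat.card_eq_one_iff_unique.mp (hcard.trans (pow_zero p))).1
      exact hH ⟨0, hk⟩ (Subsingleton.elim _ _)
    obtain ⟨M, hM, hle⟩ := IsCyclic.exists_ne_top_forall_le_of_card_eq_prime_pow hp hr hcard
    obtain ⟨g, hg⟩ := not_forall.mp (mt M.eq_top_iff'.mpr hM)
    have hzero := multCount_eq_zero_of_forall_subset_of_notMem
      (L := List.ofFn fun i => (H i : Set G)) (by simpa using fun i => hle (H i) (hH i)) hg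
    exact ht.ne' ((huni g).symm.trans hzero)
  · obtain ⟨k, H, hk, hH, -, huni⟩ := IsCyclic.exists_cyclic_factorization_multCount_eq_one h
    exact ⟨k, H, 1, hk, one_pos, hH, huni⟩

/-- A nontrivial finite cyclic group admits a proper uniform group factorization iff its
order is not a prime power; and in that case it admits a proper uniform cyclic group
factorization with multiplicity one. -/
theorem cyclic_proper_uniform_group_factorization_iff
    (G : Type*) [Group G] [Finite G] [IsCyclic G] (hG : Nat.card G ≠ 1) :
    ((∃ (k : ℕ) (H : Fin k → Subgroup G) (t : ℕ),
        1 ≤ k ∧ 0 < t ∧ (∀ i, H i ≠ ⊤) ∧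
        ∀ g : G, multCount (List.ofFn fun i => (H i : Set G)) g = t) ↔
      ¬ ∃ p r : ℕ, p.Prime ∧ Nat.card G = p ^ r) ∧
    ((¬ ∃ p r : ℕ, p.Prime ∧ Nat.card G = p ^ r) →
      ∃ (k : ℕ) (H : Fin k → Subgroup G),
        1 ≤ k ∧ (∀ i, H i ≠ ⊤) ∧ (∀ i, IsCyclic (H i)) ∧
        ∀ g : G, multCount (List.ofFn fun i => (H i : Set G)) g = 1) :=
  cyclic_proper_uniform_group_factorization_iff_general G
end

section
/- For every integer n ≥ 3, the alternating group A_n admits a uniform cyclic group factorization with multiplicity 1; that is, there exist cyclic subgroups H_1, …, H_k of A_n such that every element g ∈ A_n has a unique expression g = h_1 h_2 ⋯ h_k with h_i ∈ H_i. -/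
/-!
Let `K k ≤ A_n` fix every point `≥ k`, so that `K n = A_n`, `K 2 = 1`, and `K k` is the
stabilizer of the point `k` in `K (k + 1)`. An exact factorization of `K k` extends to one of
`K (k + 1)` by prepending cyclic subgroups whose products send `k` to each of `0, …, k` exactly
once. For `k` even the `(k + 1)`-cycle `r = (0 1 ⋯ k)` is even and `⟨r⟩` does this. For `k` odd
`r` is odd; then `r²` is even and preserves the parity of the points `0, …, k`, so with the
involution `τ = (k 0)(1 2)` every point is reached exactly once as `r^(2a) (τ^e k)`.
-/

open Set MulAction

section Tuples

variable {G : Type*}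

def tuples (L : List (Set G)) : Set (List G) := {h | List.Forall₂ (· ∈ ·) h L}

@[simp]
theorem tuples_nil : tuples ([] : List (Set G)) = {[]} := by
  ext h
  simp [tuples]

theorem mem_tuples_cons {C : Set G} {L : List (Set G)} {h : List G} :
    h ∈ tuples (C :: L) ↔ ∃ x ∈ C, ∃ t ∈ tuples L, h = x :: t := by
  simp [tuples, List.forall₂_cons_right_iff]

theorem mem_tuples_singleton {C : Set G} {h : List G} : h ∈ tuples [C] ↔ ∃ x ∈ C, h = [x] := by
  simp [mem_tuples_cons]

theorem mem_tuples_pair {C D : Set G} {h : List G} :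
    h ∈ tuples [C, D] ↔ ∃ x ∈ C, ∃ y ∈ D, h = [x, y] := by
  simp [mem_tuples_cons]

theorem mem_tuples_append {L₁ L₂ : List (Set G)} {h : List G} :
    h ∈ tuples (L₁ ++ L₂) ↔ ∃ h₁ ∈ tuples L₁, ∃ h₂ ∈ tuples L₂, h = h₁ ++ h₂ := by
  induction L₁ generalizing h with
  | nil => simp
  | cons C L ih =>
    simp only [List.cons_append, mem_tuples_cons, ih]
    constructor
    · rintro ⟨x, hx, t, ⟨h₁, hh₁, h₂, hh₂, rfl⟩, rfl⟩
      exact ⟨x :: h₁, ⟨x, hx, h₁, hh₁, rfl⟩, h₂, hh₂, rfl⟩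
    · rintro ⟨_, ⟨x, hx, h₁, hh₁, rfl⟩, h₂, hh₂, rfl⟩
      exact ⟨x, hx, h₁ ++ h₂, ⟨h₁, hh₁, h₂, hh₂, rfl⟩, rfl⟩

variable [Group G]

theorem mapsTo_prod_tuples {L : List (Set G)} {K : Subgroup G} (hL : ∀ C ∈ L, C ⊆ K) :
    MapsTo List.prod (tuples L) K := by
  induction L with
  | nil => simp [MapsTo, K.one_mem]
  | cons C L ih =>
    intro h hh
    obtain ⟨x, hx, t, ht, rfl⟩ := mem_tuples_cons.1 hh
    rw [List.prod_cons]
    exact K.mul_mem (hL C List.mem_cons_self hx) (ih (fun D hD => hL D (.tail C hD)) ht)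

theorem multCount_eq_one {L : List (Set G)} {S : Set G} (hL : BijOn List.prod (tuples L) S)
    {g : G} (hg : g ∈ S) : multCount L g = 1 := by
  obtain ⟨h, hh, rfl⟩ := hL.surjOn hg
  rw [multCount, Nat.card_eq_one_iff_exists]
  exact ⟨⟨h, hh, rfl⟩, fun ⟨h', hh', hp⟩ => Subtype.ext (hL.injOn hh' hh hp)⟩

theorem eq_one_or_eq_of_mem_zpowers_of_sq_eq_one [Finite G] {τ y : G} (hτ : τ ^ 2 = 1)
    (hy : y ∈ Subgroup.zpowers τ) : y = 1 ∨ y = τ := by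
  obtain ⟨a, rfl⟩ := mem_powers_iff_mem_zpowers.2 hy
  dsimp only
  rw [pow_eq_pow_mod a hτ]
  rcases Nat.mod_two_eq_zero_or_one a with h | h <;> simp [h]

variable {α : Type*} [MulAction G α]

theorem injOn_smul_zpowers_of_sq_eq_one [Finite G] {τ : G} {a : α} (hτ : τ ^ 2 = 1)
    (hτa : τ • a ≠ a) :
    InjOn (· • a) (Subgroup.zpowers τ : Set G) := by
  intro y hy y' hy' h
  rcases eq_one_or_eq_of_mem_zpowers_of_sq_eq_one hτ hy with rfl | rfl <;>
    rcases eq_one_or_eq_of_mem_zpowers_of_sq_eq_one hτ hy' with rfl | rfl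
  exacts [rfl, (hτa (h.symm.trans (one_smul G a))).elim, (hτa (h.trans (one_smul G a))).elim,
    rfl]

/-- The products of the tuples of `L` form a left transversal of the stabilizer of `a` in `K`,
each element of which factors uniquely along `L`. -/
def IsTransversalFactorization (L : List (Set G)) (K : Subgroup G) (a : α) : Prop :=
  MapsTo List.prod (tuples L) K ∧
    SurjOn (fun h => h.prod • a) (tuples L) ((· • a) '' (K : Set G)) ∧
    InjOn (fun h => h.prod • a) (tuples L)

theorem bijOn_prod_tuples_append {K : Subgroup G} {a : α} {L₁ L₂ : List (Set G)}
    (hL₁ : IsTransversalFactorization L₁ K a)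
    (hL₂ : BijOn List.prod (tuples L₂) (K ⊓ stabilizer G a : Subgroup G)) :
    BijOn List.prod (tuples (L₁ ++ L₂)) K := by
  obtain ⟨hK, hsurj, hinj⟩ := hL₁
  have hfix (h : List G) (hh : h ∈ tuples L₂) : h.prod • a = a := (hL₂.mapsTo hh).2
  refine ⟨?_, ?_, fun g hg => ?_⟩
  · intro h hh
    obtain ⟨h₁, hh₁, h₂, hh₂, rfl⟩ := mem_tuples_append.1 hh
    rw [List.prod_append]
    exact K.mul_mem (hK hh₁) (hL₂.mapsTo hh₂).1
  · intro h hh h' hh' hprod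
    obtain ⟨h₁, hh₁, h₂, hh₂, rfl⟩ := mem_tuples_append.1 hh
    obtain ⟨h₁', hh₁', h₂', hh₂', rfl⟩ := mem_tuples_append.1 hh'
    simp only [List.prod_append] at hprod
    obtain rfl : h₁ = h₁' := hinj hh₁ hh₁' <| by
      simpa [mul_smul, hfix h₂ hh₂, hfix h₂' hh₂'] using congrArg (· • a) hprod
    rw [hL₂.injOn hh₂ hh₂' (mul_left_cancel hprod)]
  · obtain ⟨h₁, hh₁, hga⟩ := hsurj ⟨g, hg, rfl⟩
    have hstab : h₁.prod⁻¹ * g ∈ (K ⊓ stabilizer G a : Subgroup G) :=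
      ⟨K.mul_mem (K.inv_mem (hK hh₁)) hg, by simp [mem_stabilizer_iff, mul_smul, ← hga]⟩
    obtain ⟨h₂, hh₂, hprod⟩ := hL₂.surjOn hstab
    refine ⟨h₁ ++ h₂, mem_tuples_append.2 ⟨h₁, hh₁, h₂, hh₂, rfl⟩, ?_⟩
    simp only [List.prod_append, hprod, mul_inv_cancel_left]

end Tuples

namespace Fin

open Equiv

variable {n : ℕ} [NeZero n]

theorem cycleRange_pow_apply_zero {i : Fin n} {j : ℕ} (hj : j ≤ i) :
    ((cycleRange i ^ j) 0 : ℕ) = j := by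
  induction j with
  | zero => rfl
  | succ j ih =>
    rw [pow_succ', Perm.mul_apply, coe_cycleRange_of_lt (by rw [lt_def, ih (by omega)]; omega),
      ih (by omega)]

theorem cycleRange_apply_ne_self {i p : Fin n} (hi : i ≠ 0) (hp : p ≤ i) :
    cycleRange i p ≠ p := by
  intro h
  have hval := congrArg Fin.val h
  rw [coe_cycleRange_of_le hp] at hval
  split_ifs at hval with hpi
  · exact hi (hpi ▸ Fin.ext hval.symm)
  · omega

theorem cycleRange_sq_apply_mod_two {i : Fin n} (hi : Odd (i : ℕ)) (p : Fin n) :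
    ((cycleRange i ^ 2) p : ℕ) % 2 = p % 2 := by
  obtain ⟨m, hm⟩ := hi
  rw [sq, Perm.mul_apply]
  rcases lt_trichotomy p i with hp | hp | hp
  · have h1 : (cycleRange i p : ℕ) = p + 1 := coe_cycleRange_of_lt hp
    rw [lt_def] at hp
    rw [coe_cycleRange_of_le (le_def.2 (by omega)), h1]
    split_ifs with h <;> simp only [Fin.ext_iff, h1] at h <;> omega
  · have hi0 : (0 : Fin n) < i := by rw [lt_def, val_zero]; omega
    rw [hp, cycleRange_self, coe_cycleRange_of_lt hi0, val_zero]
    omega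
  · rw [cycleRange_of_gt hp, cycleRange_of_gt hp]

theorem cycleRange_pow_two_mul_apply_mod_two {i : Fin n} (hi : Odd (i : ℕ)) (a : ℕ)
    (p : Fin n) : ((cycleRange i ^ (2 * a)) p : ℕ) % 2 = p % 2 := by
  induction a generalizing p with
  | zero => rfl
  | succ a ih =>
    rw [show 2 * (a + 1) = 2 * a + 2 by ring, pow_add, Perm.mul_apply, ih,
      cycleRange_sq_apply_mod_two hi]

theorem exists_cycleRange_pow_two_mul_apply_eq {i j : Fin n} (hj : j ≤ i) :
    ∃ a : ℕ, ∃ q, (q = 0 ∨ q = i) ∧ (cycleRange i ^ (2 * a)) q = j := by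
  rw [le_def] at hj
  rcases Nat.even_or_odd (j : ℕ) with ⟨m, hm⟩ | ⟨m, hm⟩
  · refine ⟨m, 0, Or.inl rfl, Fin.ext ?_⟩
    rw [cycleRange_pow_apply_zero (by omega), hm, two_mul]
  · refine ⟨m + 1, i, Or.inr rfl, Fin.ext ?_⟩
    rw [mul_add_one, pow_succ, Perm.mul_apply, cycleRange_self,
      cycleRange_pow_apply_zero (by omega), hm]

theorem eq_and_cycleRange_pow_two_mul_eq {i : Fin n} (hi : Odd (i : ℕ)) {q q' : Fin n}
    (hq : q = 0 ∨ q = i) (hq' : q' = 0 ∨ q' = i) {a b : ℕ}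
    (h : (cycleRange i ^ (2 * a)) q = (cycleRange i ^ (2 * b)) q') :
    q = q' ∧ cycleRange i ^ (2 * a) = cycleRange i ^ (2 * b) := by
  have hi0 : i ≠ 0 := by
    rintro rfl
    simp at hi
  obtain rfl : q = q' := by
    have hpar := congrArg (fun p : Fin n => (p : ℕ) % 2) h
    simp only [cycleRange_pow_two_mul_apply_mod_two hi] at hpar
    have := Nat.odd_iff.1 hi
    rcases hq with rfl | rfl <;> rcases hq' with rfl | rfl <;>
      simp only [val_zero] at hpar <;> first | rfl | omega
  have hqi : q ≤ i := by
    rcases hq with rfl | rfl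
    exacts [zero_le i, le_rfl]
  exact ⟨rfl,
    (isCycle_cycleRange hi0).pow_eq_pow_iff.2 ⟨q, cycleRange_apply_ne_self hi0 hqi, h⟩⟩

end Fin

section Alternating

open Equiv Equiv.Perm

variable {n : ℕ}

def fixingFrom (n k : ℕ) : Subgroup (alternatingGroup (Fin n)) :=
  fixingSubgroup (alternatingGroup (Fin n)) {p : Fin n | k ≤ (p : ℕ)}

theorem mem_fixingFrom {k : ℕ} {g : alternatingGroup (Fin n)} :
    g ∈ fixingFrom n k ↔ ∀ p : Fin n, k ≤ (p : ℕ) → (g : Perm (Fin n)) p = p := by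
  simp [fixingFrom, mem_fixingSubgroup_iff, Subgroup.smul_def, Perm.smul_def]

theorem fixingFrom_inf_stabilizer {k : ℕ} (hk : k < n) :
    fixingFrom n (k + 1) ⊓ stabilizer _ (⟨k, hk⟩ : Fin n) = fixingFrom n k := by
  ext g
  simp only [Subgroup.mem_inf, mem_fixingFrom, mem_stabilizer_iff, Subgroup.smul_def,
    Perm.smul_def]
  constructor
  · rintro ⟨hg, hgk⟩ p hp
    rcases hp.lt_or_eq with hp | hp
    · exact hg p hp
    · rwa [show p = ⟨k, hk⟩ from Fin.ext hp.symm]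
  · intro hg
    exact ⟨fun p hp => hg p (by omega), hg _ le_rfl⟩

theorem fixingFrom_self : fixingFrom n n = ⊤ :=
  eq_top_iff.2 fun _ _ => mem_fixingFrom.2 fun p hp => absurd p.isLt (by omega)

theorem fixingFrom_two : fixingFrom n 2 = ⊥ := by
  refine eq_bot_iff.2 fun g hg => ?_
  rw [mem_fixingFrom] at hg
  have hcard : (g : Perm (Fin n)).support.card ≤ 2 :=
    calc (g : Perm (Fin n)).support.card ≤ (Finset.range 2).card :=
          Finset.card_le_card_of_injOn Fin.val
            (fun p hp => by
              by_contra h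
              exact mem_support.1 hp (hg p (by simp at h; omega)))
            Fin.val_injective.injOn
      _ = 2 := Finset.card_range 2
  rcases hcard.lt_or_eq with hcard | hcard
  · exact Subgroup.mem_bot.2 (Subtype.ext (card_support_le_one.1 (by omega)))
  · have hsign := mem_alternatingGroup.1 g.2
    rw [(card_support_eq_two.1 hcard).sign_eq] at hsign
    exact absurd hsign (by decide)

theorem val_smul_le_of_mem_fixingFrom {k : ℕ} {g : alternatingGroup (Fin n)}
    (hg : g ∈ fixingFrom n (k + 1)) {p : Fin n} (hp : (p : ℕ) ≤ k) :
    ((g • p : Fin n) : ℕ) ≤ k := by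
  by_contra h
  have hfix : g • g • p = g • p :=
    (mem_fixingSubgroup_iff _).1 hg _ (show k + 1 ≤ ((g • p : Fin n) : ℕ) by omega)
  rw [smul_left_cancel_iff] at hfix
  exact h (by rwa [hfix])

theorem mem_fixingFrom_of_coe_eq_cycleRange_pow {k : ℕ} {hkn : k < n}
    {g : alternatingGroup (Fin n)} {e : ℕ}
    (hg : (g : Perm (Fin n)) = Fin.cycleRange ⟨k, hkn⟩ ^ e) :
    g ∈ fixingFrom n (k + 1) :=
  mem_fixingFrom.2 fun p hp => hg ▸
    pow_apply_eq_self_of_apply_eq_self (Fin.cycleRange_of_gt (Fin.lt_def.2 (by simp; omega))) e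

theorem exists_isTransversalFactorization_of_even {k : ℕ} (hk : Even k) (hk0 : k ≠ 0)
    (hkn : k < n) : ∃ c : alternatingGroup (Fin n),
      IsTransversalFactorization [(Subgroup.zpowers c : Set _)] (fixingFrom n (k + 1))
        (⟨k, hkn⟩ : Fin n) := by
  have : NeZero n := ⟨by omega⟩
  set i : Fin n := ⟨k, hkn⟩
  have hi0 : i ≠ 0 := Fin.ne_of_val_ne (by rw [Fin.val_zero]; exact hk0)
  let c : alternatingGroup (Fin n) :=
    ⟨Fin.cycleRange i, by rw [mem_alternatingGroup, Fin.sign_cycleRange]; exact hk.neg_one_pow⟩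
  have hcoe (a : ℕ) : ((c ^ a : alternatingGroup (Fin n)) : Perm (Fin n)) =
      Fin.cycleRange i ^ a := by
    simp [c]
  have hcK : c ∈ fixingFrom n (k + 1) := mem_fixingFrom_of_coe_eq_cycleRange_pow (pow_one _).symm
  refine ⟨c, mapsTo_prod_tuples (by simpa using hcK), ?_, ?_⟩
  · rintro _ ⟨g, hg, rfl⟩
    refine ⟨[c ^ ((g • i : Fin n) + 1 : ℕ)],
      mem_tuples_singleton.2 ⟨_, Subgroup.npow_mem_zpowers _ _, rfl⟩, Fin.ext ?_⟩
    simp only [List.prod_cons, List.prod_nil, mul_one, Subgroup.smul_def (c ^ _), hcoe,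
      Perm.smul_def]
    rw [pow_succ, Perm.mul_apply, Fin.cycleRange_self,
      Fin.cycleRange_pow_apply_zero (val_smul_le_of_mem_fixingFrom hg le_rfl)]
  · intro h hh h' hh' heq
    obtain ⟨_, hx, rfl⟩ := mem_tuples_singleton.1 hh
    obtain ⟨_, hx', rfl⟩ := mem_tuples_singleton.1 hh'
    obtain ⟨a, rfl⟩ := mem_powers_iff_mem_zpowers.2 hx
    obtain ⟨b, rfl⟩ := mem_powers_iff_mem_zpowers.2 hx'
    have hpow : Fin.cycleRange i ^ a = Fin.cycleRange i ^ b :=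
      (Fin.isCycle_cycleRange hi0).pow_eq_pow_iff.2 ⟨i, Fin.cycleRange_apply_ne_self hi0 le_rfl,
        by simpa [Subgroup.smul_def, hcoe] using heq⟩
    have hab : c ^ a = c ^ b := Subtype.ext (by rw [hcoe, hcoe, hpow])
    simp only [hab]

theorem exists_involution_mem_fixingFrom [NeZero n] {k : ℕ} (hk : 3 ≤ k) (hkn : k < n) :
    ∃ τ ∈ fixingFrom n (k + 1), τ ^ 2 = 1 ∧ τ • (⟨k, hkn⟩ : Fin n) = 0 := by
  set i : Fin n := ⟨k, hkn⟩
  set p₁ : Fin n := ⟨1, by omega⟩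
  set p₂ : Fin n := ⟨2, by omega⟩
  have hi0 : i ≠ 0 := Fin.ne_of_val_ne (by rw [Fin.val_zero]; change k ≠ 0; omega)
  have hi1 : i ≠ p₁ := Fin.ne_of_val_ne (by change k ≠ 1; omega)
  have hi2 : i ≠ p₂ := Fin.ne_of_val_ne (by change k ≠ 2; omega)
  have h01 : (0 : Fin n) ≠ p₁ := Fin.ne_of_val_ne (by rw [Fin.val_zero]; change 0 ≠ 1; omega)
  have h02 : (0 : Fin n) ≠ p₂ := Fin.ne_of_val_ne (by rw [Fin.val_zero]; change 0 ≠ 2; omega)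
  have h12 : p₁ ≠ p₂ := Fin.ne_of_val_ne (by change 1 ≠ 2; omega)
  let τ : alternatingGroup (Fin n) :=
    ⟨swap i 0 * swap p₁ p₂, by simp [mem_alternatingGroup, sign_swap hi0, sign_swap h12]⟩
  refine ⟨τ, mem_fixingFrom.2 fun p hp => ?_, Subtype.ext ?_, ?_⟩
  · have hne (q : Fin n) (hq : (q : ℕ) ≤ k) : p ≠ q := Fin.ne_of_val_ne (by omega)
    show (swap i 0 * swap p₁ p₂) p = p
    rw [Perm.mul_apply, swap_apply_of_ne_of_ne (hne _ (by change 1 ≤ k; omega))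
      (hne _ (by change 2 ≤ k; omega)), swap_apply_of_ne_of_ne (hne _ le_rfl)
      (hne _ (by rw [Fin.val_zero]; omega))]
  · show (swap i 0 * swap p₁ p₂) ^ 2 = 1
    rw [(disjoint_swap_swap (by simp [*])).commute.mul_pow, sq, sq, swap_mul_self,
      swap_mul_self, one_mul]
  · show (swap i 0 * swap p₁ p₂) i = 0
    rw [Perm.mul_apply, swap_apply_of_ne_of_ne hi1 hi2, swap_apply_left]

theorem exists_isTransversalFactorization_of_odd {k : ℕ} (hk : Odd k) (hk3 : 3 ≤ k)
    (hkn : k < n) : ∃ c τ : alternatingGroup (Fin n),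
      IsTransversalFactorization [(Subgroup.zpowers c : Set _), Subgroup.zpowers τ]
        (fixingFrom n (k + 1)) (⟨k, hkn⟩ : Fin n) := by
  have : NeZero n := ⟨by omega⟩
  obtain ⟨τ, hτK, hτ2, hτi⟩ := exists_involution_mem_fixingFrom hk3 hkn
  set i : Fin n := ⟨k, hkn⟩
  have hi0 : i ≠ 0 := Fin.ne_of_val_ne (by rw [Fin.val_zero]; change k ≠ 0; omega)
  let c : alternatingGroup (Fin n) :=
    ⟨Fin.cycleRange i ^ 2, by rw [mem_alternatingGroup, map_pow, Int.units_sq]⟩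
  have hcK : c ∈ fixingFrom n (k + 1) := mem_fixingFrom_of_coe_eq_cycleRange_pow rfl
  have hact (a : ℕ) (y : alternatingGroup (Fin n)) :
      [c ^ a, y].prod • i = (Fin.cycleRange i ^ (2 * a)) (y • i) := by
    simp [mul_smul, c, pow_mul]
  have hpt (y) (hy : y ∈ Subgroup.zpowers τ) : y • i = 0 ∨ y • i = i := by
    rcases eq_one_or_eq_of_mem_zpowers_of_sq_eq_one hτ2 hy with rfl | rfl
    exacts [Or.inr (one_smul _ i), Or.inl hτi]
  refine ⟨c, τ, mapsTo_prod_tuples (by simpa using ⟨hcK, hτK⟩), ?_, ?_⟩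
  · rintro _ ⟨g, hg, rfl⟩
    obtain ⟨a, q, hq, hqg⟩ := Fin.exists_cycleRange_pow_two_mul_apply_eq (i := i)
      (Fin.le_def.2 (val_smul_le_of_mem_fixingFrom hg (p := i) le_rfl))
    have hmem (y) (hy : y ∈ Subgroup.zpowers τ) :
        [c ^ a, y] ∈ tuples [(Subgroup.zpowers c : Set _), Subgroup.zpowers τ] :=
      mem_tuples_pair.2 ⟨_, Subgroup.npow_mem_zpowers c a, y, hy, rfl⟩
    rcases hq with rfl | rfl
    · exact ⟨_, hmem τ (Subgroup.mem_zpowers τ), by simp only [hact, hτi, hqg]⟩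
    · exact ⟨_, hmem 1 (Subgroup.one_mem _), by simp only [hact, one_smul, hqg]⟩
  · intro h hh h' hh' heq
    obtain ⟨_, hx, y, hy, rfl⟩ := mem_tuples_pair.1 hh
    obtain ⟨_, hx', y', hy', rfl⟩ := mem_tuples_pair.1 hh'
    obtain ⟨a, rfl⟩ := mem_powers_iff_mem_zpowers.2 hx
    obtain ⟨b, rfl⟩ := mem_powers_iff_mem_zpowers.2 hx'
    obtain ⟨hyi, hpow⟩ := Fin.eq_and_cycleRange_pow_two_mul_eq (i := i) hk (hpt y hy)
      (hpt y' hy') (by simpa only [hact] using heq)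
    obtain rfl := injOn_smul_zpowers_of_sq_eq_one hτ2 (hτi ▸ hi0.symm) hy hy' hyi
    have hab : c ^ a = c ^ b := Subtype.ext (by simpa [c, ← pow_mul] using hpow)
    simp only [hab]

theorem exists_bijOn_prod_fixingFrom {k : ℕ} (hk : 2 ≤ k) (hkn : k ≤ n) :
    ∃ gens : List (alternatingGroup (Fin n)),
      BijOn List.prod (tuples (gens.map fun c => (Subgroup.zpowers c : Set _)))
        (fixingFrom n k : Set (alternatingGroup (Fin n))) := by
  induction k, hk using Nat.le_induction with
  | base => exact ⟨[], by simp [fixingFrom_two]⟩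
  | succ k hk ih =>
    have hkn : k < n := by omega
    obtain ⟨gens, hgens⟩ := ih hkn.le
    rw [← fixingFrom_inf_stabilizer hkn] at hgens
    rcases Nat.even_or_odd k with heven | hodd
    · obtain ⟨c, hc⟩ := exists_isTransversalFactorization_of_even heven (by omega) hkn
      exact ⟨c :: gens, bijOn_prod_tuples_append hc hgens⟩
    · obtain ⟨c, τ, hcτ⟩ := exists_isTransversalFactorization_of_odd hodd
        (by obtain ⟨m, rfl⟩ := hodd; omega) hkn
      exact ⟨c :: τ :: gens, bijOn_prod_tuples_append hcτ hgens⟩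

end Alternating

/-- For every `n ≥ 3`, the alternating group `A_n` admits a uniform cyclic group
factorization with multiplicity `1`. -/
theorem alternatingGroup_admits_uniform_cyclic_group_factorization
    (n : ℕ) (hn : 3 ≤ n) :
    ∃ (k : ℕ) (H : Fin k → Subgroup (alternatingGroup (Fin n))),
      1 ≤ k ∧ (∀ i, IsCyclic (H i)) ∧
      ∀ g : alternatingGroup (Fin n),
        multCount (List.ofFn fun i => (H i : Set (alternatingGroup (Fin n)))) g = 1 := by
  obtain ⟨gens, hgens⟩ := exists_bijOn_prod_fixingFrom (n := n) (by omega) le_rfl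
  rw [fixingFrom_self] at hgens
  have hne : gens ≠ [] := by
    rintro rfl
    have : Nontrivial (alternatingGroup (Fin n)) :=
      alternatingGroup.nontrivial_of_three_le_card (by simpa using hn)
    obtain ⟨g, hg⟩ := exists_ne (1 : alternatingGroup (Fin n))
    obtain ⟨h, hh, rfl⟩ := hgens.surjOn (mem_univ g)
    rw [List.map_nil, tuples_nil, mem_singleton_iff] at hh
    exact hg (by rw [hh, List.prod_nil])
  refine ⟨gens.length, fun i => Subgroup.zpowers gens[(i : ℕ)], List.length_pos_iff.2 hne,
    fun _ => inferInstance, fun g => ?_⟩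
  convert multCount_eq_one hgens (mem_univ g) using 2
  exact List.ofFn_getElem_eq_map gens
    fun c => (Subgroup.zpowers c : Set (alternatingGroup (Fin n)))
end

section
/- Let m ≥ 3 and n = 2m. In the alternating group A_n, set σ_1 = (1, 2, …, m)(m+1, m+2, …, 2m) (the product of the two disjoint m-cycles), σ_2 = (1, 2)(m, 2m) (the product of two disjoint transpositions), K_1 = ⟨σ_1⟩, K_2 = ⟨σ_2⟩, and let H = Stab_{A_n}(n) be the stabilizer of the point n in A_n. Then (K_1, K_2, H) is a uniform group factorization of A_n with multiplicity 1; that is, every ρ ∈ A_n has a unique expression ρ = k_1 k_2 h with k_1 ∈ K_1, k_2 ∈ K_2, h ∈ H. -/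
theorem Nat.add_one_mod_eq_ite {m : ℕ} (hm : 0 < m) (x : ℕ) :
    (x + 1) % m = if x % m = m - 1 then 0 else x % m + 1 := by
  have hx := Nat.mod_lt x hm
  rw [← Nat.mod_add_mod]
  split_ifs with h
  · rw [h, Nat.sub_add_cancel hm, Nat.mod_self]
  · exact Nat.mod_eq_of_lt (by omega)

/-- `σ = (0 1 … m-1)(m m+1 … 2m-1)`: each half of `Fin (2 * m)` is rotated by one step. -/
def IsBlockRotation (m : ℕ) (σ : Equiv.Perm (Fin (2 * m))) : Prop :=
  ∀ i : Fin (2 * m), ((σ i : Fin (2 * m)) : ℕ) =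
    if (i : ℕ) = m - 1 then 0 else if (i : ℕ) = 2 * m - 1 then m else (i : ℕ) + 1

namespace IsBlockRotation

variable {m : ℕ} {σ : Equiv.Perm (Fin (2 * m))}

theorem pow_apply_val (hσ : IsBlockRotation m σ) (a : ℕ) (i : Fin (2 * m)) :
    ((σ ^ a) i : ℕ) = if (i : ℕ) < m then ((i : ℕ) + a) % m else m + ((i : ℕ) - m + a) % m := by
  have hi := i.isLt
  have hm : 0 < m := by omega
  induction a with
  | zero =>
    rw [pow_zero, Equiv.Perm.one_apply]
    split_ifs <;> rw [Nat.mod_eq_of_lt (by omega)] <;> omega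
  | succ a ih =>
    rw [pow_succ', Equiv.Perm.mul_apply, hσ, ih, ← Nat.add_assoc, ← Nat.add_assoc,
      Nat.add_one_mod_eq_ite hm, Nat.add_one_mod_eq_ite hm]
    have := Nat.mod_lt ((i : ℕ) + a) hm
    have := Nat.mod_lt ((i : ℕ) - m + a) hm
    split_ifs <;> omega

theorem pow_eq_one (hσ : IsBlockRotation m σ) : σ ^ m = 1 := by
  ext i
  rw [hσ.pow_apply_val, Equiv.Perm.one_apply, Nat.add_mod_right, Nat.add_mod_right]
  split_ifs with h
  · exact Nat.mod_eq_of_lt h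
  · rw [Nat.mod_eq_of_lt (by omega)]; omega

theorem exists_pow_mul_pow_apply_eq (hσ : IsBlockRotation m σ) {τ : Equiv.Perm (Fin (2 * m))}
    {x : Fin (2 * m)} (hx : (x : ℕ) = 2 * m - 1) (hτ : (τ x : ℕ) = m - 1) (y : Fin (2 * m)) :
    ∃ a b : ℕ, (σ ^ a * τ ^ b) x = y := by
  have hy := y.isLt
  by_cases hym : (y : ℕ) < m
  · refine ⟨y + 1, 1, Fin.ext ?_⟩
    rw [pow_one, Equiv.Perm.mul_apply, hσ.pow_apply_val, hτ, if_pos (by omega),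
      show m - 1 + (y + 1) = y + m by omega, Nat.add_mod_right, Nat.mod_eq_of_lt hym]
  · refine ⟨y - m + 1, 0, Fin.ext ?_⟩
    rw [pow_zero, mul_one, hσ.pow_apply_val, hx, if_neg (by omega),
      show 2 * m - 1 - m + (y - m + 1) = y - m + m by omega, Nat.add_mod_right,
      Nat.mod_eq_of_lt (by omega)]
    omega

end IsBlockRotation

theorem Equiv.swap_mul_swap_sq_eq_one {α : Type*} [DecidableEq α] {x y z t : α}
    (h : [x, y, z, t].Nodup) : (swap x y * swap z t) ^ 2 = 1 := by
  rw [(Perm.disjoint_swap_swap h).commute.mul_pow, sq, sq, swap_mul_self, swap_mul_self, one_mul]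

theorem List.forall₂_mem_triple_iff {α : Type*} {l : List α} {A B C : Set α} :
    List.Forall₂ (· ∈ ·) l [A, B, C] ↔ ∃ a ∈ A, ∃ b ∈ B, ∃ c ∈ C, l = [a, b, c] := by
  simp [List.forall₂_cons_right_iff, and_assoc]

theorem multCount_stabilizer_eq_one_of_bijective {G α : Type*} [Group G] [MulAction G α] {A B : Set G}
    {x : α} (h : Function.Bijective fun p : A × B => ((p.1 : G) * p.2) • x) (g : G) :
    multCount [A, B, MulAction.stabilizer G x] g = 1 := by
  have smul_eq : ∀ {a b c : G}, c ∈ MulAction.stabilizer G x → a * (b * c) = g →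
      (a * b) • x = g • x := by
    rintro a b c hc rfl
    rw [← mul_assoc, mul_smul _ c, MulAction.mem_stabilizer_iff.mp hc]
  rw [multCount, Nat.card_eq_one_iff_unique]
  refine ⟨⟨?_⟩, ?_⟩
  · rintro ⟨l, hl, hlg⟩ ⟨l', hl', hlg'⟩
    obtain ⟨a, ha, b, hb, c, hc, rfl⟩ := List.forall₂_mem_triple_iff.mp hl
    obtain ⟨a', ha', b', hb', c', hc', rfl⟩ := List.forall₂_mem_triple_iff.mp hl'
    simp only [List.prod_cons, List.prod_nil, mul_one] at hlg hlg'
    have hpair : ((⟨a, ha⟩, ⟨b, hb⟩) : A × B) = (⟨a', ha'⟩, ⟨b', hb'⟩) :=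
      h.1 ((smul_eq hc hlg).trans (smul_eq hc' hlg').symm)
    simp only [Prod.mk.injEq, Subtype.mk.injEq] at hpair
    obtain ⟨rfl, rfl⟩ := hpair
    obtain rfl : c = c' := mul_left_cancel (mul_left_cancel (hlg.trans hlg'.symm))
    rfl
  · obtain ⟨⟨⟨a, ha⟩, ⟨b, hb⟩⟩, hab⟩ := h.2 (g • x)
    have hc : (a * b)⁻¹ * g ∈ MulAction.stabilizer G x := by
      rw [MulAction.mem_stabilizer_iff, mul_smul, ← hab, inv_smul_smul]
    exact ⟨⟨[a, b, (a * b)⁻¹ * g], List.forall₂_mem_triple_iff.mpr ⟨a, ha, b, hb, _, hc, rfl⟩,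
      by simp [mul_assoc]⟩⟩

/-- The points `1, …, 2m` of the informal statement are `0, …, 2m - 1 : Fin (2 * m)`. -/
theorem alternatingGroup_even_factorization
    (m : ℕ) (hm : 3 ≤ m)
    (σ₁ σ₂ : alternatingGroup (Fin (2 * m)))
    (hσ₁ : ∀ i : Fin (2 * m),
      (((σ₁ : Equiv.Perm (Fin (2 * m))) i : Fin (2 * m)) : ℕ) =
        if (i : ℕ) = m - 1 then 0 else if (i : ℕ) = 2 * m - 1 then m else (i : ℕ) + 1)
    (hσ₂ : (σ₂ : Equiv.Perm (Fin (2 * m))) =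
      Equiv.swap (⟨0, by omega⟩ : Fin (2 * m)) ⟨1, by omega⟩ *
        Equiv.swap (⟨m - 1, by omega⟩ : Fin (2 * m)) ⟨2 * m - 1, by omega⟩) :
    ∀ ρ : alternatingGroup (Fin (2 * m)),
      multCount
        [((Subgroup.zpowers σ₁ : Subgroup (alternatingGroup (Fin (2 * m)))) :
            Set (alternatingGroup (Fin (2 * m)))),
         ((Subgroup.zpowers σ₂ : Subgroup (alternatingGroup (Fin (2 * m)))) :
            Set (alternatingGroup (Fin (2 * m)))),
         ((MulAction.stabilizer (alternatingGroup (Fin (2 * m)))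
            (⟨2 * m - 1, by omega⟩ : Fin (2 * m)) :
            Subgroup (alternatingGroup (Fin (2 * m)))) :
            Set (alternatingGroup (Fin (2 * m))))] ρ = 1 := by
  intro ρ
  have hσ₂_last : ((σ₂ : Equiv.Perm (Fin (2 * m))) ⟨2 * m - 1, by omega⟩ : ℕ) = m - 1 := by
    rw [hσ₂, Equiv.Perm.mul_apply, Equiv.swap_apply_right,
      Equiv.swap_apply_of_ne_of_ne (by simp [Fin.ext_iff]; omega) (by simp [Fin.ext_iff]; omega)]
  have hσ₂_sq : (σ₂ : Equiv.Perm (Fin (2 * m))) ^ 2 = 1 := by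
    rw [hσ₂]
    exact Equiv.swap_mul_swap_sq_eq_one (by simp [Fin.ext_iff]; omega)
  apply multCount_stabilizer_eq_one_of_bijective
  refine Function.Surjective.bijective_of_nat_card_le (fun y => ?_) ?_
  · obtain ⟨a, b, hab⟩ := IsBlockRotation.exists_pow_mul_pow_apply_eq hσ₁ rfl hσ₂_last y
    exact ⟨(⟨σ₁ ^ a, Subgroup.npow_mem_zpowers _ _⟩, ⟨σ₂ ^ b, Subgroup.npow_mem_zpowers _ _⟩), hab⟩
  · rw [Nat.card_prod]
    change Nat.card (Subgroup.zpowers σ₁) * Nat.card (Subgroup.zpowers σ₂) ≤ Nat.card (Fin (2 * m))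
    rw [Nat.card_zpowers, Nat.card_zpowers, Nat.card_fin, ← Subgroup.orderOf_coe,
      ← Subgroup.orderOf_coe]
    exact (Nat.mul_le_mul (orderOf_le_of_pow_eq_one (by omega) (IsBlockRotation.pow_eq_one hσ₁))
      (orderOf_le_of_pow_eq_one two_pos hσ₂_sq)).trans_eq (mul_comm m 2)
end
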